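/- Let K_ε = [[1−q, q],[q, 1−q]] with q = 1/(e^ε+1), ε > 0. Then K_ε is invertible with K_ε^{-1} = (1−2q)^{-1} [[1−q, −q],[−q, 1−q]], and for ε₁, ε₂ > 0 the 2×2 stochastic matrices satisfy: the matrix K^{merge} = (K_{ε₁}^{-1} ⊗ K_{ε₂}^{-1}) K^{or} K_{ε*} has all entries in [0,1] and rows summing to 1, where K^{or} is the 4×2 matrix sending (0,0) to column 0 and (0,1),(1,0),(1,1) to column 1, and ε* = −log(e^{−ε₁}+e^{−ε₂}−e^{−(ε₁+ε₂)}). -/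

import Mathlib

open Real Matrix Kronecker

/-- Transition matrix of symmetric randomized response with budget `ε`. -/
noncomputable def Kmat (ε : ℝ) : Matrix (Fin 2) (Fin 2) ℝ :=
  !![1 - 1 / (Real.exp ε + 1), 1 / (Real.exp ε + 1);
     1 / (Real.exp ε + 1), 1 - 1 / (Real.exp ε + 1)]

/-- Claimed inverse of `Kmat ε`. -/
noncomputable def KmatInv (ε : ℝ) : Matrix (Fin 2) (Fin 2) ℝ :=
  (1 - 2 * (1 / (Real.exp ε + 1)))⁻¹ •
    !![1 - 1 / (Real.exp ε + 1), -(1 / (Real.exp ε + 1));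
       -(1 / (Real.exp ε + 1)), 1 - 1 / (Real.exp ε + 1)]

/-- Deterministic transition matrix of the bitwise `or` operation. -/
def Kor : Matrix (Fin 2 × Fin 2) (Fin 2) ℝ :=
  fun i j => if i = (0, 0) then (if j = 0 then 1 else 0) else (if j = 1 then 1 else 0)

/-! With `a = exp ε₁`, `b = exp ε₂`, the inverses are `K_{εᵢ}⁻¹ = (a - 1)⁻¹ [[a, -1], [-1, a]]` (resp. `b`),
all kernels involved have unit row sums, and row `(i, k)` of `(A ⊗ B) K^{or}` is `(p, 1 - p)` with
`p = A i 0 * B k 0`. Since `exp ε* = ab / (a + b - 1)`, the first entry of row `(i, k)` of `K^{merge}` is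
`(a + b - 1 + αβ) / (ab + a + b - 1)` with `α ∈ {a, -1}`, `β ∈ {b, -1}`; as `αβ ∈ {ab, -a, -b, 1}`,
it lies in `[0, 1]`, and then so does the second entry. -/

section RowSums

variable {R : Type*} [Semiring R] {l l' m n : Type*} [Fintype m] [Fintype n]

theorem sum_mul_apply_eq_one {M : Matrix l m R} {K : Matrix m n R}
    (hM : ∀ i, ∑ j, M i j = 1) (hK : ∀ i, ∑ j, K i j = 1) (i : l) :
    ∑ j, (M * K) i j = 1 := by
  simp only [mul_apply]
  rw [Finset.sum_comm]
  simp only [← Finset.mul_sum, hK, mul_one, hM]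

theorem sum_kronecker_apply_eq_one {A : Matrix l m R} {B : Matrix l' n R}
    (hA : ∀ i, ∑ j, A i j = 1) (hB : ∀ i, ∑ j, B i j = 1) (i : l × l') :
    ∑ j, (A ⊗ₖ B) i j = 1 := by
  simp only [kroneckerMap_apply, Fintype.sum_prod_type, ← Finset.sum_mul_sum, hA, hB, mul_one]

end RowSums

theorem sum_Kor_apply (i : Fin 2 × Fin 2) : ∑ j, Kor i j = 1 := by
  by_cases hi : i = (0, 0) <;> simp [Kor, hi]

theorem sum_Kmat_apply (ε : ℝ) (i : Fin 2) : ∑ j, Kmat ε i j = 1 := by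
  fin_cases i <;> simp [Kmat]

theorem Kmat_eq (ε : ℝ) : Kmat ε = (exp ε + 1)⁻¹ • !![exp ε, 1; 1, exp ε] := by
  have : exp ε + 1 ≠ 0 := by positivity
  ext i j
  fin_cases i <;> fin_cases j <;> simp [Kmat] <;> field_simp <;> ring

-- Also at `ε = 0`, where both sides are `0` because `0⁻¹ = 0`.
theorem KmatInv_eq (ε : ℝ) : KmatInv ε = (exp ε - 1)⁻¹ • !![exp ε, -1; -1, exp ε] := by
  have : exp ε + 1 ≠ 0 := by positivity
  have hq : 1 - 2 * (1 / (exp ε + 1)) = (exp ε - 1) / (exp ε + 1) := by field_simp; ring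
  ext i j
  fin_cases i <;> fin_cases j <;> simp only [KmatInv, hq, inv_div] <;> simp <;> field_simp <;> ring

theorem Kmat_mul_KmatInv {ε : ℝ} (hε : ε ≠ 0) : Kmat ε * KmatInv ε = 1 := by
  have hp : exp ε + 1 ≠ 0 := by positivity
  have hm : exp ε - 1 ≠ 0 := sub_ne_zero.2 ((exp_eq_one_iff ε).not.2 hε)
  rw [Kmat_eq, KmatInv_eq]
  ext i j
  fin_cases i <;> fin_cases j <;> simp [mul_apply, Fin.sum_univ_two] <;> field_simp <;> ring

theorem KmatInv_mul_Kmat {ε : ℝ} (hε : ε ≠ 0) : KmatInv ε * Kmat ε = 1 :=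
  mul_eq_one_comm.1 (Kmat_mul_KmatInv hε)

theorem sum_KmatInv_apply {ε : ℝ} (hε : ε ≠ 0) (i : Fin 2) : ∑ j, KmatInv ε i j = 1 := by
  have hm : exp ε - 1 ≠ 0 := sub_ne_zero.2 ((exp_eq_one_iff ε).not.2 hε)
  rw [KmatInv_eq]
  fin_cases i <;> simp [Fin.sum_univ_two] <;> field_simp <;> ring

noncomputable def mergeBudget (ε₁ ε₂ : ℝ) : ℝ :=
  -log (exp (-ε₁) + exp (-ε₂) - exp (-(ε₁ + ε₂)))

noncomputable def Kmerge (ε₁ ε₂ : ℝ) : Matrix (Fin 2 × Fin 2) (Fin 2) ℝ :=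
  (KmatInv ε₁ ⊗ₖ KmatInv ε₂) * Kor * Kmat (mergeBudget ε₁ ε₂)

theorem exp_mergeBudget {ε₁ ε₂ : ℝ} (h₁ : 0 ≤ ε₁) (h₂ : 0 ≤ ε₂) :
    exp (mergeBudget ε₁ ε₂) = exp ε₁ * exp ε₂ / (exp ε₁ + exp ε₂ - 1) := by
  have ha : 1 ≤ exp ε₁ := one_le_exp h₁
  have hb : 1 ≤ exp ε₂ := one_le_exp h₂
  have hsum : exp (-ε₁) + exp (-ε₂) - exp (-(ε₁ + ε₂))
      = (exp ε₁ + exp ε₂ - 1) / (exp ε₁ * exp ε₂) := by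
    rw [exp_neg, exp_neg, exp_neg, exp_add]
    field_simp
    ring
  have hpos : 0 < (exp ε₁ + exp ε₂ - 1) / (exp ε₁ * exp ε₂) := by
    apply div_pos <;> nlinarith
  rw [mergeBudget, hsum, exp_neg, exp_log hpos, inv_div]

theorem sum_Kmerge_apply {ε₁ ε₂ : ℝ} (h₁ : ε₁ ≠ 0) (h₂ : ε₂ ≠ 0) (i : Fin 2 × Fin 2) :
    ∑ j, Kmerge ε₁ ε₂ i j = 1 :=
  sum_mul_apply_eq_one (sum_mul_apply_eq_one
    (sum_kronecker_apply_eq_one (sum_KmatInv_apply h₁) (sum_KmatInv_apply h₂)) sum_Kor_apply)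
    (sum_Kmat_apply _) i

theorem kronecker_mul_Kor_apply_zero {l l' : Type*} (A : Matrix l (Fin 2) ℝ)
    (B : Matrix l' (Fin 2) ℝ) (i : l) (k : l') :
    ((A ⊗ₖ B) * Kor) (i, k) 0 = A i 0 * B k 0 := by
  simp [mul_apply, Kor]

theorem mul_Kmat_apply_zero {l : Type*} {P : Matrix l (Fin 2) ℝ} (hP : ∀ i, ∑ j, P i j = 1)
    (ε : ℝ) (i : l) : (P * Kmat ε) i 0 = (P i 0 * exp ε + (1 - P i 0)) / (exp ε + 1) := by
  have hP1 : P i 1 = 1 - P i 0 := by rw [← hP i, Fin.sum_univ_two]; ring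
  have : exp ε + 1 ≠ 0 := by positivity
  rw [Kmat_eq]
  simp [mul_apply, Fin.sum_univ_two, hP1]
  field_simp

theorem Kmerge_apply_zero {ε₁ ε₂ : ℝ} (h₁ : 0 < ε₁) (h₂ : 0 < ε₂) (i k : Fin 2) :
    Kmerge ε₁ ε₂ (i, k) 0 =
      (exp ε₁ + exp ε₂ - 1 + ![exp ε₁, -1] i * ![exp ε₂, -1] k) /
        (exp ε₁ * exp ε₂ + exp ε₁ + exp ε₂ - 1) := by
  have ha : 1 < exp ε₁ := one_lt_exp_iff.2 h₁
  have hb : 1 < exp ε₂ := one_lt_exp_iff.2 h₂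
  have : exp ε₁ * exp ε₂ + exp ε₁ + exp ε₂ - 1 ≠ 0 := by nlinarith
  have : exp ε₁ + exp ε₂ - 1 ≠ 0 := by nlinarith
  have : exp ε₁ - 1 ≠ 0 := by linarith
  have : exp ε₂ - 1 ≠ 0 := by linarith
  rw [Kmerge, mul_Kmat_apply_zero (sum_mul_apply_eq_one (sum_kronecker_apply_eq_one
    (sum_KmatInv_apply h₁.ne') (sum_KmatInv_apply h₂.ne')) sum_Kor_apply),
    kronecker_mul_Kor_apply_zero, exp_mergeBudget h₁.le h₂.le, KmatInv_eq, KmatInv_eq]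
  fin_cases i <;> fin_cases k <;> simp <;> field_simp <;> ring

theorem Kmerge_apply_zero_mem {ε₁ ε₂ : ℝ} (h₁ : 0 < ε₁) (h₂ : 0 < ε₂) (i : Fin 2 × Fin 2) :
    0 ≤ Kmerge ε₁ ε₂ i 0 ∧ Kmerge ε₁ ε₂ i 0 ≤ 1 := by
  have ha : 1 < exp ε₁ := one_lt_exp_iff.2 h₁
  have hb : 1 < exp ε₂ := one_lt_exp_iff.2 h₂
  have hD : 0 < exp ε₁ * exp ε₂ + exp ε₁ + exp ε₂ - 1 := by nlinarith
  obtain ⟨i, k⟩ := i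
  rw [Kmerge_apply_zero h₁ h₂]
  refine ⟨div_nonneg ?_ hD.le, (div_le_one hD).2 ?_⟩ <;>
    fin_cases i <;> fin_cases k <;> simp <;> nlinarith

theorem Kmerge_apply_mem {ε₁ ε₂ : ℝ} (h₁ : 0 < ε₁) (h₂ : 0 < ε₂) (i : Fin 2 × Fin 2)
    (j : Fin 2) : 0 ≤ Kmerge ε₁ ε₂ i j ∧ Kmerge ε₁ ε₂ i j ≤ 1 := by
  have h₀ := Kmerge_apply_zero_mem h₁ h₂ i
  have hsum := sum_Kmerge_apply h₁.ne' h₂.ne' i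
  rw [Fin.sum_univ_two] at hsum
  fin_cases j
  · exact h₀
  · constructor <;> simp <;> linarith

theorem stmt16 (ε₁ ε₂ : ℝ) (h₁ : 0 < ε₁) (h₂ : 0 < ε₂) :
    (∀ ε : ℝ, 0 < ε → Kmat ε * KmatInv ε = 1 ∧ KmatInv ε * Kmat ε = 1) ∧
    (let εs : ℝ := -Real.log (Real.exp (-ε₁) + Real.exp (-ε₂) - Real.exp (-(ε₁ + ε₂)))
     let Kmerge : Matrix (Fin 2 × Fin 2) (Fin 2) ℝ :=
       (KmatInv ε₁ ⊗ₖ KmatInv ε₂) * Kor * Kmat εs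
     (∀ i j, 0 ≤ Kmerge i j ∧ Kmerge i j ≤ 1) ∧ (∀ i, ∑ j, Kmerge i j = 1)) :=
  ⟨fun _ hε => ⟨Kmat_mul_KmatInv hε.ne', KmatInv_mul_Kmat hε.ne'⟩,
    Kmerge_apply_mem h₁ h₂, sum_Kmerge_apply h₁.ne' h₂.ne'⟩
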